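/- In ℂ⁴ ⊗ ℂ⁴, there is no product vector α ⊗ β with ⟨α⊗β, α₁⟩ ≠ 0 and ⟨α⊗β, α_k⟩ = 0 for k = 2,3,4,5, where α₁,…,α₅ are the states built from parameters a,b,c,d,e,f,g,h ∈ (0,1) with a²+b²=c²+d²=e²+f²=g²+h²=1 as: α₁ = e(a|00⟩+b|11⟩)+f(c|22⟩+d|33⟩), α₂ = f(a|00⟩+b|11⟩)−e(c|22⟩+d|33⟩), α₃ = g(b|00⟩−a|11⟩)+h(d|22⟩−c|33⟩), α₄ = h(b|00⟩−a|11⟩)−g(d|22⟩−c|33⟩), α₅ = |01⟩. -/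

import Mathlib

/-! Write `xᵢ = conj (α i * β i)` for the diagonal coefficients of `α ⊗ β`; all overlaps with
`α₁, …, α₄` only see these. Orthogonality to `α₃` and `α₄` is a rotation (`g² + h² = 1`) applied to
`(b x₀ - a x₁, d x₂ - c x₃)`, so `b x₀ = a x₁`. Orthogonality to `α₅ = |01⟩` gives `α 0 = 0` or
`β 1 = 0`, so `x₀ = 0` or `x₁ = 0`, and then both vanish. Orthogonality to `α₂` now reads
`e (c x₂ + d x₃) = 0`, which kills the overlap with `α₁` as well. -/

open scoped ComplexInnerProductSpace

/-- The five states α₁,…,α₅ in ℂ⁴ ⊗ ℂ⁴ built from real parameters. -/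
noncomputable def alphaSt (a b c d e f g h : ℝ) : Fin 5 → EuclideanSpace ℂ (Fin 4 × Fin 4)
  | 0 => WithLp.toLp 2 fun p => if p = (0, 0) then (e * a : ℝ) else if p = (1, 1) then (e * b : ℝ)
      else if p = (2, 2) then (f * c : ℝ) else if p = (3, 3) then (f * d : ℝ) else 0
  | 1 => WithLp.toLp 2 fun p => if p = (0, 0) then (f * a : ℝ) else if p = (1, 1) then (f * b : ℝ)
      else if p = (2, 2) then (-(e * c) : ℝ) else if p = (3, 3) then (-(e * d) : ℝ) else 0
  | 2 => WithLp.toLp 2 fun p => if p = (0, 0) then (g * b : ℝ) else if p = (1, 1) then (-(g * a) : ℝ)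
      else if p = (2, 2) then (h * d : ℝ) else if p = (3, 3) then (-(h * c) : ℝ) else 0
  | 3 => WithLp.toLp 2 fun p => if p = (0, 0) then (h * b : ℝ) else if p = (1, 1) then (-(h * a) : ℝ)
      else if p = (2, 2) then (-(g * d) : ℝ) else if p = (3, 3) then (g * c : ℝ) else 0
  | 4 => WithLp.toLp 2 fun p => if p = (0, 1) then 1 else 0

/-- Product vector α ⊗ β in ℂ⁴ ⊗ ℂ⁴. -/
noncomputable def prodVec4 (α β : EuclideanSpace ℂ (Fin 4)) :
    EuclideanSpace ℂ (Fin 4 × Fin 4) :=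
  WithLp.toLp 2 fun p => α p.1 * β p.2

open scoped ComplexConjugate

theorem eq_zero_of_rotation_eq_zero {R : Type*} [CommRing R] {g h u v : R}
    (hgh : g ^ 2 + h ^ 2 = 1) (h₁ : g * u + h * v = 0) (h₂ : h * u - g * v = 0) : u = 0 := by
  linear_combination g * h₁ + h * h₂ - u * hgh

section Overlaps

variable (a b c d e f g h : ℝ) (α β : EuclideanSpace ℂ (Fin 4))

theorem inner_prodVec4_alphaSt_zero : ⟪prodVec4 α β, alphaSt a b c d e f g h 0⟫ =
    e * (a * conj (α 0 * β 0) + b * conj (α 1 * β 1)) +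
      f * (c * conj (α 2 * β 2) + d * conj (α 3 * β 3)) := by
  simp only [prodVec4, alphaSt, Fin.isValue, Complex.ofReal_mul, PiLp.inner_apply,
    RCLike.inner_apply, map_mul, ite_mul, zero_mul, Fintype.sum_prod_type, Prod.mk.injEq,
    Fin.sum_univ_four, and_true, zero_ne_one, and_false, ↓reduceIte, Fin.reduceEq, one_ne_zero,
    add_zero, zero_add]
  ring

theorem inner_prodVec4_alphaSt_one : ⟪prodVec4 α β, alphaSt a b c d e f g h 1⟫ =
    f * (a * conj (α 0 * β 0) + b * conj (α 1 * β 1)) -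
      e * (c * conj (α 2 * β 2) + d * conj (α 3 * β 3)) := by
  simp only [prodVec4, alphaSt, Fin.isValue, Complex.ofReal_mul, Complex.ofReal_neg,
    PiLp.inner_apply, RCLike.inner_apply, map_mul, ite_mul, neg_mul, zero_mul,
    Fintype.sum_prod_type, Prod.mk.injEq, Fin.sum_univ_four, and_true, zero_ne_one, and_false,
    ↓reduceIte, Fin.reduceEq, one_ne_zero, add_zero, zero_add]
  ring

theorem inner_prodVec4_alphaSt_two : ⟪prodVec4 α β, alphaSt a b c d e f g h 2⟫ =
    g * (b * conj (α 0 * β 0) - a * conj (α 1 * β 1)) +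
      h * (d * conj (α 2 * β 2) - c * conj (α 3 * β 3)) := by
  simp only [prodVec4, alphaSt, Fin.isValue, Complex.ofReal_mul, Complex.ofReal_neg,
    PiLp.inner_apply, RCLike.inner_apply, map_mul, ite_mul, neg_mul, zero_mul,
    Fintype.sum_prod_type, Prod.mk.injEq, Fin.sum_univ_four, and_true, zero_ne_one, and_false,
    ↓reduceIte, Fin.reduceEq, one_ne_zero, add_zero, zero_add]
  ring

theorem inner_prodVec4_alphaSt_three : ⟪prodVec4 α β, alphaSt a b c d e f g h 3⟫ =
    h * (b * conj (α 0 * β 0) - a * conj (α 1 * β 1)) -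
      g * (d * conj (α 2 * β 2) - c * conj (α 3 * β 3)) := by
  simp only [prodVec4, alphaSt, Fin.isValue, Complex.ofReal_mul, Complex.ofReal_neg,
    PiLp.inner_apply, RCLike.inner_apply, map_mul, ite_mul, neg_mul, zero_mul,
    Fintype.sum_prod_type, Prod.mk.injEq, Fin.sum_univ_four, and_true, zero_ne_one, and_false,
    ↓reduceIte, Fin.reduceEq, one_ne_zero, add_zero, zero_add]
  ring

theorem inner_prodVec4_alphaSt_four :
    ⟪prodVec4 α β, alphaSt a b c d e f g h 4⟫ = conj (α 0) * conj (β 1) := by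
  simp [prodVec4, alphaSt, PiLp.inner_apply]

end Overlaps

theorem overlap_eq_zero_of_orthogonal {K : Type*} [Field K] {a b c d e f g h : K}
    (ha : a ≠ 0) (hb : b ≠ 0) (he : e ≠ 0) (hgh : g ^ 2 + h ^ 2 = 1) {x₀ x₁ x₂ x₃ : K}
    (h₂ : f * (a * x₀ + b * x₁) - e * (c * x₂ + d * x₃) = 0)
    (h₃ : g * (b * x₀ - a * x₁) + h * (d * x₂ - c * x₃) = 0)
    (h₄ : h * (b * x₀ - a * x₁) - g * (d * x₂ - c * x₃) = 0)
    (h₀₁ : x₀ = 0 ∨ x₁ = 0) :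
    e * (a * x₀ + b * x₁) + f * (c * x₂ + d * x₃) = 0 := by
  have hratio : b * x₀ = a * x₁ := sub_eq_zero.mp (eq_zero_of_rotation_eq_zero hgh h₃ h₄)
  have hx₀ : x₀ = 0 ∧ x₁ = 0 := by
    rcases h₀₁ with hx₀ | hx₁
    · exact ⟨hx₀, by simpa [hx₀, ha] using hratio.symm⟩
    · exact ⟨by simpa [hx₁, hb] using hratio, hx₁⟩
  obtain ⟨rfl, rfl⟩ := hx₀
  have hcd : c * x₂ + d * x₃ = 0 := by
    simpa [he] using h₂
  rw [hcd]
  ring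

theorem stmt17_general (a b c d e f g h : ℝ)
    (ha : 0 < a) (hb : 0 < b)
    (he : 0 < e)
    (hgh : g ^ 2 + h ^ 2 = 1) :
    ¬ ∃ α β : EuclideanSpace ℂ (Fin 4),
      ⟪prodVec4 α β, alphaSt a b c d e f g h 0⟫ ≠ 0 ∧
      ∀ k : Fin 5, k ≠ 0 → ⟪prodVec4 α β, alphaSt a b c d e f g h k⟫ = 0 := by
  rintro ⟨α, β, h₁, horth⟩
  have h₂ := inner_prodVec4_alphaSt_one a b c d e f g h α β ▸ horth 1 (by decide)
  have h₃ := inner_prodVec4_alphaSt_two a b c d e f g h α β ▸ horth 2 (by decide)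
  have h₄ := inner_prodVec4_alphaSt_three a b c d e f g h α β ▸ horth 3 (by decide)
  have h₀₁ : conj (α 0 * β 0) = 0 ∨ conj (α 1 * β 1) = 0 := by
    have h₅ := inner_prodVec4_alphaSt_four a b c d e f g h α β ▸ horth 4 (by decide)
    rw [map_mul, map_mul]
    rcases mul_eq_zero.mp h₅ with hα | hβ
    · exact .inl (by rw [hα, zero_mul])
    · exact .inr (by rw [hβ, mul_zero])
  refine h₁ (inner_prodVec4_alphaSt_zero a b c d e f g h α β ▸ ?_)
  exact overlap_eq_zero_of_orthogonal (by exact_mod_cast ha.ne') (by exact_mod_cast hb.ne')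
    (by exact_mod_cast he.ne') (by exact_mod_cast hgh) h₂ h₃ h₄ h₀₁

/-- No product vector has nonzero overlap with α₁ and zero overlap with
α₂, α₃, α₄, α₅. -/
theorem stmt17 (a b c d e f g h : ℝ)
    (ha : 0 < a) (ha1 : a < 1) (hb : 0 < b) (hb1 : b < 1)
    (hc : 0 < c) (hc1 : c < 1) (hd : 0 < d) (hd1 : d < 1)
    (he : 0 < e) (he1 : e < 1) (hf : 0 < f) (hf1 : f < 1)
    (hg : 0 < g) (hg1 : g < 1) (hh : 0 < h) (hh1 : h < 1)
    (hab : a ^ 2 + b ^ 2 = 1) (hcd : c ^ 2 + d ^ 2 = 1)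
    (hef : e ^ 2 + f ^ 2 = 1) (hgh : g ^ 2 + h ^ 2 = 1) :
    ¬ ∃ α β : EuclideanSpace ℂ (Fin 4),
      ⟪prodVec4 α β, alphaSt a b c d e f g h 0⟫ ≠ 0 ∧
      ∀ k : Fin 5, k ≠ 0 → ⟪prodVec4 α β, alphaSt a b c d e f g h k⟫ = 0 :=
  stmt17_general a b c d e f g h ha hb he hgh
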